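/- arXiv:math/0510216 — 2 statements merged into one kernel-verified Lean document; each statement's English description precedes it below -/
import Mathlib

section
/- Splitting along an edge (Subbotin–Sumin formula): if a tree graph Γ is obtained by joining trees Γ₁ and Γ₂ by a single edge between vertex α of Γ₁ and vertex β of Γ₂, then the characteristic polynomials of the Coxeter transformations satisfy X(Γ, λ) = X(Γ₁, λ)·X(Γ₂, λ) − λ·X(Γ₁∖α, λ)·X(Γ₂∖β, λ). -/
open Polynomial Matrix

noncomputable section
open scoped Classical

/-- The (generalized) Cartan matrix of a simply-laced graph `G`:
`2` on the diagonal, `-1` for adjacent vertices, `0` otherwise. -/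
def cartanOf (R : Type*) [CommRing R] {V : Type*} (G : SimpleGraph V) : Matrix V V R :=
  fun i j => if i = j then 2 else if G.Adj i j then -1 else 0

/-- The matrix of the simple reflection `σ_i(x) = x - φ_i(x) α_i` associated to the
`i`-th row of a generalized Cartan matrix `K`. -/
def reflOf (R : Type*) [CommRing R] {V : Type*} (K : Matrix V V R) (i : V) : Matrix V V R :=
  fun j k => (if j = k then 1 else 0) - (if j = i then K i k else 0)

/-- The Coxeter transformation associated to the generalized Cartan matrix `K`:
the product of all simple reflections taken in the order given by the list `L`. -/
def coxeterOf (R : Type*) [CommRing R] {V : Type*} [Fintype V] [DecidableEq V]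
    (K : Matrix V V R) (L : List V) : Matrix V V R :=
  (L.map (reflOf R K)).prod

/-- `L` is an enumeration of the (finite) vertex set: each vertex occurs exactly once. -/
def IsEnum {V : Type*} (L : List V) : Prop := L.Nodup ∧ ∀ v, v ∈ L

end

noncomputable section
open scoped Classical

/-- The characteristic polynomial `𝒳(Γ, λ) = det(C − λ·I)` of the Coxeter transformation
of the graph with Cartan matrix `K`, in the sign convention of Subbotin–Sumin. -/
def Xchar {V : Type*} [Fintype V] [DecidableEq V] (K : Matrix V V ℚ) (L : List V) :
    Polynomial ℚ :=
  Matrix.det ((coxeterOf ℚ K L).map Polynomial.C - Matrix.scalar V (Polynomial.X : ℚ[X]))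

/-- The graph obtained by joining `G₁` and `G₂` by a single edge between the vertex `a`
of `G₁` and the vertex `b` of `G₂`. -/
def joinGraph {V₁ V₂ : Type*} (G₁ : SimpleGraph V₁) (G₂ : SimpleGraph V₂) (a : V₁) (b : V₂) :
    SimpleGraph (V₁ ⊕ V₂) where
  Adj x y :=
    match x, y with
    | Sum.inl u, Sum.inl v => G₁.Adj u v
    | Sum.inr u, Sum.inr v => G₂.Adj u v
    | Sum.inl u, Sum.inr v => u = a ∧ v = b
    | Sum.inr u, Sum.inl v => v = a ∧ u = b
  symm := by
    constructor
    rintro (u | u) (v | v) h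
    · exact G₁.adj_symm h
    · exact h
    · exact h
    · exact G₂.adj_symm h
  loopless := by
    constructor
    rintro (u | u) h
    · exact G₁.irrefl h
    · exact G₂.irrefl h

/-- The graph obtained from `G` by removing the vertex `a`. -/
def deleteVertex {V : Type*} (G : SimpleGraph V) (a : V) : SimpleGraph {v : V // v ≠ a} :=
  G.comap Subtype.val

/-!
Write `K` for the Cartan matrix, `C` for the Coxeter transformation of an enumeration `L` and `U`
for the strictly upper triangular part of `K` in the order of `L`. Multiplying the reflections
one at a time gives `(1 + U) C = 1 + U - K`, and `det (1 + U) = 1`, so `𝒳(Γ, λ)` is the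
determinant of `(1 + U)(C - λ)`. This matrix has `-(1 + λ)` on the diagonal and, for each edge,
the entries `λ` and `1` in an orientation that depends on `L`.

The Laplace-type identity
`det [[A, x e_ab], [y e_ba, D]] = det A det D - x y det A' det D'` (with `A'`, `D'` the minors
at `a`, `b`) has two consequences. Cutting a forest along one of its edges, it shows by induction
that the determinant of a matrix supported on the forest depends only on the diagonal entries and
on the products `M i j * M j i` over the edges. These products are all `λ`, so the enumeration does
not matter. Applied to the edge joining `Γ₁` and `Γ₂`, it gives the splitting formula.
-/

namespace Matrix

variable {R : Type*} [CommRing R] {n m : Type*} [Fintype n] [DecidableEq n]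

theorem det_add_single (M : Matrix n n R) (i j : n) (c : R) :
    (M + single i j c).det = M.det + c * M.adjugate j i := by
  have hrow : M + single i j c = M.updateRow i (M i + c • Pi.single j 1) := by
    ext k l
    by_cases hk : k = i
    · subst hk; simp [single_apply, Pi.single_apply, eq_comm]
    · simp [hk, single_apply_of_row_ne (Ne.symm hk)]
  rw [hrow, det_updateRow_add, det_updateRow_smul, updateRow_eq_self, adjugate_apply]

theorem det_updateRow_single (A : Matrix n n R) (a : n) :
    (A.updateRow a (Pi.single a 1)).det = (A.submatrix ((↑) : {i // i ≠ a} → n) (↑)).det := by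
  have : Subsingleton {i // ¬i ≠ a} := ⟨fun i j => Subtype.ext (by grind)⟩
  rw [twoBlockTriangular_det _ (· ≠ a) fun i hi j hj => by simp_all,
    det_eq_elem_of_subsingleton (toSquareBlockProp _ fun i => ¬i ≠ a) ⟨a, not_not.2 rfl⟩]
  simp only [toSquareBlockProp_def, of_apply, updateRow_self, Pi.single_eq_same, mul_one]
  congr 1
  ext i j
  simp [i.2]

theorem det_fromBlocks_single_single [Fintype m] [DecidableEq m]
    (A : Matrix n n R) (D : Matrix m m R) (a : n) (b : m) (x y : R) :
    (fromBlocks A (single a b x) (single b a y) D).det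
      = A.det * D.det - x * y * ((A.submatrix ((↑) : {i // i ≠ a} → n) (↑)).det
          * (D.submatrix ((↑) : {j // j ≠ b} → m) (↑)).det) := by
  have hsplit : fromBlocks A (single a b x) (single b a y) D
      = fromBlocks A 0 (single b a y) D + single (Sum.inl a) (Sum.inr b) x := by
    ext (i | i) (j | j) <;> simp [single_apply]
  set T := (fromBlocks A 0 (single b a y) D).updateRow (Sum.inl a) (Pi.single (Sum.inr b) 1)
  -- Exchanging the rows `inl a` and `inr b` makes `T` block upper triangular.
  have hswap : T.submatrix (Equiv.swap (Sum.inl a) (Sum.inr b)) id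
      = fromBlocks (A.updateRow a (Pi.single a y)) (of fun i j => if i = a then D b j else 0) 0
          (D.updateRow b (Pi.single b 1)) := by
    ext (i | i) (j | j) <;> simp [T, Equiv.swap_apply_def, updateRow_apply, Pi.single_apply] <;>
      split_ifs <;> simp_all [eq_comm]
  have hT : T.det = -(y * ((A.submatrix ((↑) : {i // i ≠ a} → n) (↑)).det
      * (D.submatrix ((↑) : {j // j ≠ b} → m) (↑)).det)) := by
    have hsingle : Pi.single a y = y • Pi.single a (1 : R) := by
      rw [← Pi.single_smul', smul_eq_mul, mul_one]
    have hperm := det_permute (Equiv.swap (Sum.inl a) (Sum.inr b)) T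
    rw [hswap, det_fromBlocks_zero₂₁, Equiv.Perm.sign_swap (by simp), hsingle,
      det_updateRow_smul, det_updateRow_single, det_updateRow_single] at hperm
    simp only [Units.val_neg, Units.val_one, Int.cast_neg, Int.cast_one, neg_mul, one_mul] at hperm
    linear_combination hperm
  rw [hsplit, det_add_single, det_fromBlocks_zero₁₂, adjugate_apply, hT]
  ring

end Matrix

theorem SimpleGraph.IsAcyclic.exists_cut_of_adj {V : Type*} {G : SimpleGraph V}
    (hG : G.IsAcyclic) {a b : V} (hab : G.Adj a b) :
    ∃ p : V → Prop, p a ∧ ¬p b ∧ ∀ u v, G.Adj u v → p u → ¬p v → u = a ∧ v = b := by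
  have hbridge := SimpleGraph.isAcyclic_iff_forall_adj_isBridge.1 hG hab
  refine ⟨(G.deleteEdges {s(a, b)}).Reachable a, .rfl, hbridge, fun u v huv hu hv => ?_⟩
  by_cases he : s(u, v) = s(a, b)
  · rcases Sym2.eq_iff.1 he with h | ⟨rfl, rfl⟩
    · exact h
    · exact absurd hu hbridge
  · exact absurd (hu.trans (SimpleGraph.deleteEdges_adj.2 ⟨huv, he⟩).reachable) hv

theorem SimpleGraph.IsAcyclic.deleteVertex {V : Type*} {G : SimpleGraph V} (hG : G.IsAcyclic)
    (a : V) : (deleteVertex G a).IsAcyclic :=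
  hG.of_comap (.subtype _)

namespace Matrix

variable {R : Type*} [CommRing R] {V : Type*} [DecidableEq V]

theorem submatrix_sumCompl_eq_fromBlocks {G : SimpleGraph V} {M : Matrix V V R}
    (hM : ∀ i j, i ≠ j → ¬G.Adj i j → M i j = 0) {p : V → Prop} [DecidablePred p] {a b : V}
    (hpa : p a) (hpb : ¬p b) (hcut : ∀ u v, G.Adj u v → p u → ¬p v → u = a ∧ v = b) :
    M.submatrix (Equiv.sumCompl p) (Equiv.sumCompl p)
      = fromBlocks (M.submatrix (↑) (↑)) (single ⟨a, hpa⟩ ⟨b, hpb⟩ (M a b))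
          (single ⟨b, hpb⟩ ⟨a, hpa⟩ (M b a)) (M.submatrix (↑) (↑)) := by
  ext (⟨i, hi⟩ | ⟨i, hi⟩) (⟨j, hj⟩ | ⟨j, hj⟩)
  · rfl
  · simp only [submatrix_apply, Equiv.sumCompl_apply_inl, Equiv.sumCompl_apply_inr,
      fromBlocks_apply₁₂, single_apply, Subtype.mk.injEq]
    split_ifs with h
    · rw [h.1, h.2]
    · refine hM i j (by rintro rfl; exact hj hi) fun hij => h ?_
      obtain ⟨rfl, rfl⟩ := hcut i j hij hi hj
      exact ⟨rfl, rfl⟩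
  · simp only [submatrix_apply, Equiv.sumCompl_apply_inl, Equiv.sumCompl_apply_inr,
      fromBlocks_apply₂₁, single_apply, Subtype.mk.injEq]
    split_ifs with h
    · rw [h.1, h.2]
    · refine hM i j (by rintro rfl; exact hi hj) fun hij => h ?_
      obtain ⟨rfl, rfl⟩ := hcut j i hij.symm hj hi
      exact ⟨rfl, rfl⟩
  · rfl

theorem det_eq_det_of_isAcyclic [Fintype V] {G : SimpleGraph V} (hG : G.IsAcyclic)
    {M N : Matrix V V R} (hM : ∀ i j, i ≠ j → ¬G.Adj i j → M i j = 0)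
    (hN : ∀ i j, i ≠ j → ¬G.Adj i j → N i j = 0) (hdiag : ∀ i, M i i = N i i)
    (hadj : ∀ i j, G.Adj i j → M i j * M j i = N i j * N j i) :
    M.det = N.det := by
  induction h : Fintype.card V using Nat.strong_induction_on generalizing V with
  | _ n ih =>
  have hrestrict : ∀ {W : Type _} [Fintype W] [DecidableEq W] (f : W → V), f.Injective →
      Fintype.card W < n → (M.submatrix f f).det = (N.submatrix f f).det :=
    fun f hf hW => ih _ hW (hG.of_comap ⟨f, hf⟩) (fun i j hij h => hM _ _ (hf.ne hij) h)
      (fun i j hij h => hN _ _ (hf.ne hij) h) (fun i => hdiag _) (fun i j h => hadj _ _ h) rfl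
  by_cases hE : ∃ a b, G.Adj a b
  · obtain ⟨a, b, hab⟩ := hE
    obtain ⟨p, hpa, hpb, hcut⟩ := hG.exists_cut_of_adj hab
    have hcard : Fintype.card {v // p v} < n := h ▸ Fintype.card_subtype_lt hpb
    have hcard' : Fintype.card {v // ¬p v} < n := h ▸ Fintype.card_subtype_lt (not_not.2 hpa)
    rw [← det_submatrix_equiv_self (Equiv.sumCompl p) M,
      ← det_submatrix_equiv_self (Equiv.sumCompl p) N,
      submatrix_sumCompl_eq_fromBlocks hM hpa hpb hcut,
      submatrix_sumCompl_eq_fromBlocks hN hpa hpb hcut,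
      det_fromBlocks_single_single, det_fromBlocks_single_single, hadj a b hab,
      submatrix_submatrix, submatrix_submatrix, submatrix_submatrix, submatrix_submatrix,
      hrestrict _ Subtype.val_injective hcard, hrestrict _ Subtype.val_injective hcard',
      hrestrict _ (Subtype.val_injective.comp Subtype.val_injective)
        ((Fintype.card_subtype_le _).trans_lt hcard),
      hrestrict _ (Subtype.val_injective.comp Subtype.val_injective)
        ((Fintype.card_subtype_le _).trans_lt hcard')]
  · push Not at hE
    congr 1
    ext i j
    by_cases hij : i = j
    · subst hij; exact hdiag i
    · rw [hM i j hij (hE i j), hN i j hij (hE i j)]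

end Matrix

section Coxeter

variable {R : Type*} [CommRing R] {V : Type*} [DecidableEq V]

def rowsIn (K : Matrix V V R) (l : List V) : Matrix V V R :=
  fun i j => if i ∈ l then K i j else 0

def strictUpperAlong (K : Matrix V V R) (l : List V) : Matrix V V R :=
  fun i j => if j ∈ l ∧ l.idxOf i < l.idxOf j then K i j else 0

/-- For an enumeration `L`, `coxeterCharMatrix G L.idxOf` is `(1 + U)(C - λ)`, where `C` is the
Coxeter transformation and `U` the strictly upper triangular part of the Cartan matrix in the
order of `L`. -/
def coxeterCharMatrix (G : SimpleGraph V) (r : V → ℕ) : Matrix V V R[X] :=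
  fun i j => if i = j then -(1 + X) else if G.Adj i j then (if r i < r j then X else 1) else 0

theorem coxeterCharMatrix_submatrix {W : Type*} [DecidableEq W] (G : SimpleGraph V) (r : V → ℕ)
    {f : W → V} (hf : f.Injective) :
    (coxeterCharMatrix G r : Matrix V V R[X]).submatrix f f
      = coxeterCharMatrix (G.comap f) (r ∘ f) := by
  ext i j : 1
  simp [coxeterCharMatrix, hf.eq_iff]

variable [Fintype V]

theorem reflOf_eq_one_sub_single_mul (K : Matrix V V R) (v : V) :
    reflOf R K v = 1 - single v v 1 * K := by
  ext i j
  by_cases hi : i = v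
  · subst hi; simp [reflOf, one_apply]
  · simp [reflOf, one_apply, hi]

theorem coxeterOf_append_singleton (K : Matrix V V R) (l : List V) (v : V) :
    coxeterOf R K (l ++ [v]) = coxeterOf R K l * (1 - single v v 1 * K) := by
  simp [coxeterOf, reflOf_eq_one_sub_single_mul]

theorem rowsIn_append_singleton (K : Matrix V V R) {l : List V} {v : V} (hv : v ∉ l) :
    rowsIn K (l ++ [v]) = rowsIn K l + single v v 1 * K := by
  ext i j
  by_cases hi : i = v
  · subst hi; simp [rowsIn, hv]
  · simp [rowsIn, hi, single_mul_apply_of_ne _ _ _ _ _ hi]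

theorem strictUpperAlong_append_singleton (K : Matrix V V R) {l : List V} {v : V} (hv : v ∉ l) :
    strictUpperAlong K (l ++ [v]) = strictUpperAlong K l + rowsIn K l * single v v 1 := by
  ext i j
  by_cases hj : j = v
  · subst hj
    have := List.idxOf_lt_length_iff (l := l) (a := i)
    simp [strictUpperAlong, rowsIn, hv, List.idxOf_append]
    split_ifs <;> simp_all
  · have := List.idxOf_lt_length_iff (l := l) (a := j)
    simp [strictUpperAlong, hj, List.idxOf_append, mul_single_apply_of_ne _ _ _ _ _ hj]
    split_ifs <;> grind

theorem single_mul_coxeterOf_of_notMem (K : Matrix V V R) {l : List V} {v : V} (hv : v ∉ l) :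
    single v v 1 * coxeterOf R K l = single v v 1 := by
  induction l using List.reverseRecOn with
  | nil => simp [coxeterOf]
  | append_singleton l w ih =>
    have hvw : v ≠ w := by rintro rfl; simp at hv
    rw [coxeterOf_append_singleton, ← mul_assoc, ih (by simp_all), mul_sub, mul_one,
      ← mul_assoc, single_mul_single_of_ne _ _ _ _ hvw, zero_mul, sub_zero]

theorem strictUpperAlong_mul_single_of_notMem (K : Matrix V V R) {l : List V} {v : V}
    (hv : v ∉ l) : strictUpperAlong K l * single v v 1 = 0 := by
  ext i j
  by_cases hj : j = v
  · subst hj; simp [strictUpperAlong, hv]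
  · simp [hj]

theorem one_add_strictUpperAlong_mul_coxeterOf (K : Matrix V V R) {l : List V} (hl : l.Nodup) :
    (1 + strictUpperAlong K l) * coxeterOf R K l = 1 + strictUpperAlong K l - rowsIn K l := by
  induction l using List.reverseRecOn with
  | nil =>
    have hU : strictUpperAlong K ([] : List V) = 0 := by ext; simp [strictUpperAlong]
    have hK : rowsIn K ([] : List V) = 0 := by ext; simp [rowsIn]
    simp [coxeterOf, hU, hK]
  | append_singleton l v ih =>
    rw [List.nodup_append_comm, List.singleton_append, List.nodup_cons] at hl
    obtain ⟨hv, hl⟩ := hl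
    set U := strictUpperAlong K l
    set E := single v v (1 : R)
    have hEC : E * coxeterOf R K l = E := single_mul_coxeterOf_of_notMem K hv
    have hUE : U * E = 0 := strictUpperAlong_mul_single_of_notMem K hv
    have hEE : E * E = E := by simp [E]
    rw [coxeterOf_append_singleton, strictUpperAlong_append_singleton K hv,
      rowsIn_append_singleton K hv, ← add_assoc, add_mul, mul_assoc (rowsIn K l), ← mul_assoc E,
      ← mul_assoc, ih hl, hEC]
    calc _ = 1 + U - rowsIn K l + rowsIn K l * E - (1 + U) * E * K + rowsIn K l * E * K
          - rowsIn K l * (E * E) * K := by noncomm_ring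
      _ = _ := by rw [add_mul, hUE, hEE]; noncomm_ring

theorem det_one_add_strictUpperAlong (K : Matrix V V R) (l : List V) :
    (1 + strictUpperAlong K l).det = 1 := by
  have htri : (1 + strictUpperAlong K l).BlockTriangular l.idxOf := by
    intro i j hji
    have hij : i ≠ j := by rintro rfl; exact lt_irrefl _ hji
    simp [strictUpperAlong, one_apply, hij, hji.le.not_gt]
  rw [htri.det]
  refine Finset.prod_eq_one fun k _ => ?_
  have hblock : (1 + strictUpperAlong K l).toSquareBlock l.idxOf k = 1 := by
    ext ⟨i, hi⟩ ⟨j, hj⟩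
    simp_all [toSquareBlock_def, strictUpperAlong, one_apply]
  rw [hblock, det_one]

theorem map_one_add_strictUpperAlong_mul_eq_coxeterCharMatrix (G : SimpleGraph V) {L : List V}
    (hL : IsEnum L) :
    (1 + strictUpperAlong (cartanOf R G) L).map C
        * ((coxeterOf R (cartanOf R G) L).map C - scalar V (X : R[X]))
      = coxeterCharMatrix G L.idxOf := by
  set K := cartanOf R G
  have hK : rowsIn K L = K := by ext i j; simp [rowsIn, hL.2]
  rw [mul_sub, ← Matrix.map_mul, one_add_strictUpperAlong_mul_coxeterOf K hL.1, hK]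
  refine Matrix.ext fun i j => ?_
  by_cases hij : i = j
  · subst hij
    simp [K, cartanOf, strictUpperAlong, coxeterCharMatrix, one_apply]
    rw [show (C 2 : R[X]) = 2 from map_ofNat C 2]
    ring
  · simp [K, cartanOf, strictUpperAlong, coxeterCharMatrix, one_apply, hij, hL.2]
    split_ifs <;> simp

theorem det_coxeterCharMatrix_eq_of_isAcyclic {G : SimpleGraph V} (hG : G.IsAcyclic)
    {r s : V → ℕ} (hr : r.Injective) (hs : s.Injective) :
    (coxeterCharMatrix G r : Matrix V V R[X]).det = (coxeterCharMatrix G s).det := by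
  have hprod : ∀ {t : V → ℕ}, t.Injective → ∀ i j, G.Adj i j →
      (coxeterCharMatrix G t : Matrix V V R[X]) i j * coxeterCharMatrix G t j i = X := by
    intro t ht i j hij
    rcases (ht.ne hij.ne).lt_or_gt with h | h <;>
      simp [coxeterCharMatrix, hij, hij.symm, hij.ne, hij.ne', h, h.not_gt]
  have hzero : ∀ {t : V → ℕ} (i j), i ≠ j → ¬G.Adj i j →
      (coxeterCharMatrix G t : Matrix V V R[X]) i j = 0 := by
    intro t i j hij h
    simp [coxeterCharMatrix, hij, h]
  exact det_eq_det_of_isAcyclic hG hzero hzero (fun i => by simp [coxeterCharMatrix])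
    fun i j hij => (hprod hr i j hij).trans (hprod hs i j hij).symm

end Coxeter

section Join

variable {R : Type*} [CommRing R] {V₁ V₂ : Type*} [DecidableEq V₁] [DecidableEq V₂]
  (G₁ : SimpleGraph V₁) (G₂ : SimpleGraph V₂) (a : V₁) (b : V₂)

theorem coxeterCharMatrix_joinGraph (r : V₁ ⊕ V₂ → ℕ) :
    (coxeterCharMatrix (joinGraph G₁ G₂ a b) r : Matrix _ _ R[X])
      = fromBlocks (coxeterCharMatrix G₁ (r ∘ Sum.inl))
          (single a b (if r (.inl a) < r (.inr b) then X else 1))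
          (single b a (if r (.inr b) < r (.inl a) then X else 1))
          (coxeterCharMatrix G₂ (r ∘ Sum.inr)) := by
  ext (i | i) (j | j) : 1 <;>
    simp only [coxeterCharMatrix, fromBlocks_apply₁₁, fromBlocks_apply₁₂, fromBlocks_apply₂₁,
      fromBlocks_apply₂₂, single_apply, Function.comp_apply] <;>
    grind [joinGraph]

theorem det_coxeterCharMatrix_joinGraph [Fintype V₁] [Fintype V₂] {r : V₁ ⊕ V₂ → ℕ}
    (hr : r (.inl a) ≠ r (.inr b)) :
    (coxeterCharMatrix (joinGraph G₁ G₂ a b) r : Matrix _ _ R[X]).det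
      = (coxeterCharMatrix G₁ (r ∘ Sum.inl)).det * (coxeterCharMatrix G₂ (r ∘ Sum.inr)).det
        - X * ((coxeterCharMatrix (deleteVertex G₁ a) ((r ∘ Sum.inl) ∘ Subtype.val)).det
          * (coxeterCharMatrix (deleteVertex G₂ b) ((r ∘ Sum.inr) ∘ Subtype.val)).det) := by
  rw [coxeterCharMatrix_joinGraph, det_fromBlocks_single_single,
    coxeterCharMatrix_submatrix _ _ Subtype.val_injective,
    coxeterCharMatrix_submatrix _ _ Subtype.val_injective]
  congr 2
  rcases hr.lt_or_gt with h | h <;> simp [h, h.not_gt]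

end Join

theorem IsEnum.injective_idxOf {V : Type*} [DecidableEq V] {L : List V} (hL : IsEnum L) :
    L.idxOf.Injective :=
  fun v _ h => (List.idxOf_inj (hL.2 v)).1 h

theorem Xchar_cartanOf_eq_det {V : Type*} [Fintype V] [DecidableEq V] (G : SimpleGraph V)
    {L : List V} (hL : IsEnum L) :
    Xchar (cartanOf ℚ G) L = (coxeterCharMatrix G L.idxOf).det := by
  rw [← map_one_add_strictUpperAlong_mul_eq_coxeterCharMatrix G hL, det_mul,
    ← RingHom.mapMatrix_apply, ← RingHom.map_det, det_one_add_strictUpperAlong, map_one, one_mul,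
    Xchar]

theorem Xchar_cartanOf_eq_det_of_isAcyclic {V : Type*} [Fintype V] [DecidableEq V]
    {G : SimpleGraph V} (hG : G.IsAcyclic) {L : List V} (hL : IsEnum L) {r : V → ℕ}
    (hr : r.Injective) : Xchar (cartanOf ℚ G) L = (coxeterCharMatrix G r).det := by
  rw [Xchar_cartanOf_eq_det G hL]
  exact det_coxeterCharMatrix_eq_of_isAcyclic hG hL.injective_idxOf hr

/-- **Subbotin–Sumin splitting-along-an-edge formula.** If a tree `Γ` is obtained by
joining trees `Γ₁` and `Γ₂` by a single edge between the vertex `α` of `Γ₁` and the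
vertex `β` of `Γ₂`, then the characteristic polynomials of the Coxeter transformations
satisfy `𝒳(Γ, λ) = 𝒳(Γ₁, λ)·𝒳(Γ₂, λ) − λ·𝒳(Γ₁∖α, λ)·𝒳(Γ₂∖β, λ)`. -/
theorem subbotin_sumin_splitting (m k : ℕ)
    (G₁ : SimpleGraph (Fin m)) (G₂ : SimpleGraph (Fin k))
    (hG₁ : G₁.IsTree) (hG₂ : G₂.IsTree) (a : Fin m) (b : Fin k)
    (L : List (Fin m ⊕ Fin k)) (hL : IsEnum L)
    (L₁ : List (Fin m)) (hL₁ : IsEnum L₁) (L₂ : List (Fin k)) (hL₂ : IsEnum L₂)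
    (L₁' : List {v : Fin m // v ≠ a}) (hL₁' : IsEnum L₁')
    (L₂' : List {v : Fin k // v ≠ b}) (hL₂' : IsEnum L₂') :
    Xchar (cartanOf ℚ (joinGraph G₁ G₂ a b)) L
      = Xchar (cartanOf ℚ G₁) L₁ * Xchar (cartanOf ℚ G₂) L₂
        - Polynomial.X * (Xchar (cartanOf ℚ (deleteVertex G₁ a)) L₁'
            * Xchar (cartanOf ℚ (deleteVertex G₂ b)) L₂') := by
  have hr := hL.injective_idxOf
  have hr₁ := hr.comp Sum.inl_injective
  have hr₂ := hr.comp Sum.inr_injective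
  rw [Xchar_cartanOf_eq_det _ hL, det_coxeterCharMatrix_joinGraph _ _ _ _ (hr.ne Sum.inl_ne_inr),
    Xchar_cartanOf_eq_det_of_isAcyclic hG₁.isAcyclic hL₁ hr₁,
    Xchar_cartanOf_eq_det_of_isAcyclic hG₂.isAcyclic hL₂ hr₂,
    Xchar_cartanOf_eq_det_of_isAcyclic (hG₁.isAcyclic.deleteVertex a) hL₁'
      (hr₁.comp Subtype.val_injective),
    Xchar_cartanOf_eq_det_of_isAcyclic (hG₂.isAcyclic.deleteVertex b) hL₂'
      (hr₂.comp Subtype.val_injective)]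

end
end

section
/- Single-vertex splitting: if Γ is obtained from a simply-laced tree Γ₁ by attaching a single new vertex by an edge to vertex α ∈ Γ₁, then X(Γ, λ) = −(λ + 1)·X(Γ₁, λ) − λ·X(Γ₁∖α, λ). -/
/-!
Order the simple reflections by the enumeration `L` and let `N` be the part of the Cartan matrix
`K` lying above the diagonal for that order. Then `(1 + N) (1 - C) = K` for the Coxeter
transformation `C`, and `det (1 + N) = 1`, so `𝒳(Γ, λ)` is `(-1)^|Γ|` times the determinant of
the pencil with diagonal `K_jj + λ - 1`, entries `λ K_jk` for `j` before `k` and `K_jk` for `j`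
after `k`. On a forest every permutation contributing to this determinant is an involution
along edges, so the determinant sees only the products `λ K_jk K_kj` and does not depend on the
order. Expanding it along the new leaf gives the recursion.
-/

open Polynomial Matrix

noncomputable section
open scoped Classical

/-- The graph obtained from `G₁` by attaching one new vertex by a single edge to the
vertex `a` of `G₁`. -/
def attachVertex {V₁ : Type*} (G₁ : SimpleGraph V₁) (a : V₁) : SimpleGraph (V₁ ⊕ Unit) where
  Adj x y :=
    match x, y with
    | Sum.inl u, Sum.inl v => G₁.Adj u v
    | Sum.inr _, Sum.inr _ => False
    | Sum.inl u, Sum.inr _ => u = a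
    | Sum.inr _, Sum.inl v => v = a
  symm := by
    constructor
    rintro (u | u) (v | v) h
    · exact G₁.adj_symm h
    · exact h
    · exact h
    · exact h.elim
  loopless := by
    constructor
    rintro (u | u) h
    · exact G₁.ne_of_adj h rfl
    · exact h.elim

namespace List

variable {α : Type*} {L : List α} {i j k : α}

theorem pair_sublist_cons_iff : [j, k] <+ i :: L ↔ j = i ∧ k ∈ L ∨ [j, k] <+ L := by
  simp [sublist_cons_iff, or_comm, eq_comm]

theorem Nodup.not_pair_sublist_self (hL : L.Nodup) : ¬ [j, j] <+ L := fun h => by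
  simpa using hL.sublist h

theorem Nodup.pair_sublist_iff_not_swap (hL : L.Nodup) (hj : j ∈ L) (hk : k ∈ L) (hjk : j ≠ k) :
    [j, k] <+ L ↔ ¬ [k, j] <+ L := by
  induction L with
  | nil => simp at hj
  | cons i T ih =>
    obtain ⟨hiT, hT⟩ := nodup_cons.mp hL
    have hnot : ∀ x, ¬ [x, i] <+ T := fun x h => hiT (h.subset (by simp))
    simp only [pair_sublist_cons_iff]
    rcases mem_cons.mp hj with rfl | hjT <;> rcases mem_cons.mp hk with rfl | hkT
    · exact absurd rfl hjk
    · simp [hkT, hjk.symm, hnot]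
    · simp [hjT, hjk, hnot]
    · have hji : j ≠ i := fun h => hiT (h ▸ hjT)
      have hki : k ≠ i := fun h => hiT (h ▸ hkT)
      simp [hji, hki, ih hT hjT hkT]

end List

section CoxeterAlgebra

open scoped List

variable {R S V : Type*} [CommRing R] [CommRing S]

def strictPart (K : Matrix V V S) (r : V → V → Prop) : Matrix V V S :=
  of fun j k => if r j k then K j k else 0

def coxeterPencil (K : Matrix V V S) (r : V → V → Prop) (t : S) : Matrix V V S :=
  of fun j k => if j = k then K j j + t - 1 else if r j k then t * K j k else K j k

theorem strictPart_nil (K : Matrix V V S) : strictPart K (fun j k => [j, k] <+ []) = 0 := by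
  ext j k
  simp [strictPart]

theorem reflOf_eq_one_sub_vecMulVec [DecidableEq V] (K : Matrix V V S) (i : V) :
    reflOf S K i = 1 - vecMulVec (Pi.single i 1) (K i) := by
  ext j k
  by_cases hji : j = i <;> simp [reflOf, vecMulVec_apply, one_apply, hji]

variable [Fintype V] [DecidableEq V]

theorem coxeterOf_cons (K : Matrix V V S) (i : V) (L : List V) :
    coxeterOf S K (i :: L) = reflOf S K i * coxeterOf S K L := by
  simp [coxeterOf]

theorem coxeterOf_map (f : R →+* S) (K : Matrix V V R) (L : List V) :
    (coxeterOf R K L).map f = coxeterOf S (K.map f) L := by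
  induction L with
  | nil => simp [coxeterOf]
  | cons i L ih =>
    rw [coxeterOf_cons, coxeterOf_cons, Matrix.map_mul, ih]
    congr 1
    ext j k
    simp only [reflOf, map_apply]
    split_ifs <;> simp

theorem vecMul_coxeterOf_of_forall_mem (K : Matrix V V S) {L : List V} {v : V → S}
    (hv : ∀ s ∈ L, v s = 0) : v ᵥ* coxeterOf S K L = v := by
  induction L with
  | nil => simp [coxeterOf]
  | cons i L ih =>
    rw [coxeterOf_cons, ← vecMul_vecMul, reflOf_eq_one_sub_vecMulVec, vecMul_sub, vecMul_one,
      vecMul_vecMulVec, dotProduct_single_one, hv i (by simp), zero_smul, sub_zero]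
    exact ih fun s hs => hv s (List.mem_cons_of_mem i hs)

theorem one_add_strictPart_cons (K : Matrix V V S) {i : V} {L : List V} (hi : i ∉ L) :
    1 + strictPart K (fun j k => [j, k] <+ i :: L)
      = (1 + strictPart K (fun j k => [j, k] <+ L))
        * (1 + vecMulVec (Pi.single i 1) (fun k => if k ∈ L then K i k else 0)) := by
  have hcol : (1 + strictPart K (fun j k => [j, k] <+ L)) *ᵥ Pi.single i 1 = Pi.single i 1 := by
    ext j
    have : ¬ [j, i] <+ L := fun h => hi (h.subset (by simp))
    simp [Matrix.add_apply, strictPart, this, one_apply, Pi.single_apply, eq_comm]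
  rw [mul_add, mul_one, mul_vecMulVec, hcol, add_assoc]
  congr 1
  ext j k
  by_cases hji : j = i
  · subst hji
    have : ¬ [j, k] <+ L := fun h => hi (h.subset (by simp))
    simp [strictPart, List.pair_sublist_cons_iff, this, vecMulVec_apply]
  · simp [strictPart, List.pair_sublist_cons_iff, hji, vecMulVec_apply]

theorem one_add_strictPart_mul_coxeterOf (K : Matrix V V S) {L : List V} (hL : L.Nodup) :
    (1 + strictPart K (fun j k => [j, k] <+ L)) * coxeterOf S K L
      = 1 + strictPart K (fun j k => [j, k] <+ L) - of fun j k => if j ∈ L then K j k else 0 := by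
  induction L with
  | nil =>
    rw [strictPart_nil, coxeterOf]
    ext j k
    simp
  | cons i L ih =>
    obtain ⟨hi, hL⟩ := List.nodup_cons.mp hL
    set U := 1 + strictPart K (fun j k => [j, k] <+ L)
    set w : V → S := fun k => if k ∈ L then K i k else 0
    set w' : V → S := fun k => if k ∈ L then 0 else K i k
    have hUe : U *ᵥ Pi.single i 1 = Pi.single i 1 := by
      ext j
      have : ¬ [j, i] <+ L := fun h => hi (h.subset (by simp))
      simp [U, Matrix.add_apply, strictPart, this, one_apply, Pi.single_apply, eq_comm]
    have hstep : (1 + vecMulVec (Pi.single i 1) w) * reflOf S K i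
        = 1 - vecMulVec (Pi.single i 1) w' := by
      rw [reflOf_eq_one_sub_vecMulVec, mul_sub, mul_one, add_mul, one_mul,
        vecMulVec_mul_vecMulVec, dotProduct_single_one]
      ext j k
      by_cases hk : k ∈ L <;> simp [w, w', hi, hk, vecMulVec_apply]
    have hfix : w' ᵥ* coxeterOf S K L = w' :=
      vecMul_coxeterOf_of_forall_mem K fun s hs => by simp [w', hs]
    rw [one_add_strictPart_cons K hi, coxeterOf_cons, mul_assoc, ← mul_assoc _ (reflOf S K i),
      hstep, sub_mul, one_mul, vecMulVec_mul, hfix, mul_sub, ih hL, mul_vecMulVec, hUe,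
      mul_add, mul_one, mul_vecMulVec, hUe]
    ext j k
    by_cases hj : j = i
    · subst hj
      by_cases hk : k ∈ L <;> simp [U, w', hi, hk, vecMulVec_apply]
    · simp [U, w', hj, vecMulVec_apply]

theorem det_one_add_strictPart (K : Matrix V V S) {L : List V} (hL : L.Nodup) :
    (1 + strictPart K (fun j k => [j, k] <+ L)).det = 1 := by
  induction L with
  | nil => rw [strictPart_nil, add_zero, det_one]
  | cons i L ih =>
    obtain ⟨hi, hL⟩ := List.nodup_cons.mp hL
    rw [one_add_strictPart_cons K hi, det_mul, ih hL, vecMulVec_eq Unit,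
      det_one_add_replicateCol_mul_replicateRow]
    simp [hi]

theorem det_coxeterOf_sub_scalar (K : Matrix V V S) {L : List V} (hL : IsEnum L) (t : S) :
    (coxeterOf S K L - scalar V t).det
      = (-1) ^ Fintype.card V * (coxeterPencil K (fun j k => [j, k] <+ L) t).det := by
  have h : (1 + strictPart K (fun j k => [j, k] <+ L)) * (coxeterOf S K L - scalar V t)
      = -coxeterPencil K (fun j k => [j, k] <+ L) t := by
    rw [mul_sub, one_add_strictPart_mul_coxeterOf K hL.1]
    ext j k
    by_cases hjk : j = k
    · subst hjk
      simp only [coxeterPencil, strictPart, hL.2, hL.1.not_pair_sublist_self, ↓reduceIte,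
        scalar_apply, mul_diagonal, Matrix.sub_apply, Matrix.add_apply, Matrix.neg_apply,
        one_apply_eq, of_apply, add_zero, one_mul, neg_sub]
      ring
    · by_cases hr : [j, k] <+ L
      · simp only [coxeterPencil, strictPart, hL.2, hjk, hr, ↓reduceIte, scalar_apply,
          mul_diagonal, Matrix.sub_apply, Matrix.add_apply, Matrix.neg_apply, ne_eq,
          not_false_eq_true, one_apply_ne, of_apply, zero_add, sub_self, zero_sub, neg_inj]
        ring
      · simp [coxeterPencil, strictPart, hL.2, hjk, hr, mul_diagonal]
  have := congrArg det h
  rwa [det_mul, det_one_add_strictPart K hL.1, one_mul, det_neg] at this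

theorem Xchar_eq_det_coxeterPencil (K : Matrix V V ℚ) {L : List V} (hL : IsEnum L) :
    Xchar K L
      = (-1) ^ Fintype.card V * (coxeterPencil (K.map C) (fun j k => [j, k] <+ L) X).det := by
  rw [Xchar, coxeterOf_map, det_coxeterOf_sub_scalar _ hL]

end CoxeterAlgebra

section Forest

open Finset Function

variable {S V : Type*} [CommRing S] {G : SimpleGraph V}

theorem SimpleGraph.IsAcyclic.minimalPeriod_lt_three (hG : G.IsAcyclic) {f : V → V} {x : V}
    (hf : ∀ k, G.Adj (f^[k + 1] x) (f^[k] x)) : minimalPeriod f x < 3 := by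
  by_contra! hp
  have hinj : ∀ a b, a < minimalPeriod f x → b < minimalPeriod f x → f^[a] x = f^[b] x → a = b :=
    fun a b ha hb h => iterate_injOn_Iio_minimalPeriod ha hb h
  have hmod : ∀ k, f^[k % minimalPeriod f x] x = f^[k] x := fun k => iterate_mod_minimalPeriod_eq
  generalize minimalPeriod f x = p at hp hinj hmod
  obtain ⟨n, rfl⟩ : ∃ n, p = n + 3 := ⟨p - 3, by omega⟩
  have hadj : ∀ u v : Fin (n + 3), u - v = 1 → G.Adj (f^[u] x) (f^[v] x) := by
    intro u v huv
    have hval : ((v + 1 : Fin (n + 3)) : ℕ) = (v + 1) % (n + 3) := by simp [Fin.val_add]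
    rw [sub_eq_iff_eq_add'.mp huv, hval, hmod]
    exact hf v
  refine isAcyclic_iff_free_cycleGraph.mp hG (n + 3) (by omega)
    ⟨⟨⟨fun k => f^[k] x, fun {u v} huv => ?_⟩, fun u v h => Fin.ext (hinj u v u.2 v.2 h)⟩⟩
  rcases SimpleGraph.cycleGraph_adj.mp huv with h | h
  · exact hadj u v h
  · exact (hadj v u h).symm

theorem SimpleGraph.IsAcyclic.involutive_of_forall_adj [Finite V] (hG : G.IsAcyclic)
    {σ : Equiv.Perm V} (hσ : ∀ i, σ i ≠ i → G.Adj (σ i) i) : Involutive σ := by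
  intro i
  by_cases hi : σ i = i
  · rw [hi, hi]
  have hmoved : ∀ k, σ (σ^[k] i) ≠ σ^[k] i := fun k h =>
    hi ((σ.injective.iterate k).eq_iff.mp (by rw [← iterate_succ_apply, iterate_succ_apply', h]))
  have hlt := hG.minimalPeriod_lt_three fun k => by
    rw [iterate_succ_apply']
    exact hσ _ (hmoved k)
  have hpos := minimalPeriod_pos_of_mem_periodicPts (σ.injective.mem_periodicPts i)
  have hne : minimalPeriod σ i ≠ 1 := fun h => hi (minimalPeriod_eq_one_iff_isFixedPt.mp h)
  have h2 : minimalPeriod σ i = 2 := by omega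
  simpa [h2] using iterate_minimalPeriod (f := σ) (x := i)

theorem prod_apply_eq_of_involutive [Fintype V] {σ : Equiv.Perm V} (hσ : Involutive σ)
    {f g : V → V → S} (hfix : ∀ i, σ i = i → f i i = g i i)
    (hpair : ∀ i, σ i ≠ i → f (σ i) i * f i (σ i) = g (σ i) i * g i (σ i)) :
    ∏ i, f (σ i) i = ∏ i, g (σ i) i := by
  classical
  -- each 2-cycle `{i, σ i}` of `σ` is accounted for at its smaller point
  let _ : LinearOrder V := LinearOrder.lift' _ (Fintype.equivFin V).injective
  have split : ∀ F : V → S, ∏ i, F i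
      = (∏ i ∈ univ.filter (fun i => σ i = i), F i)
        * ∏ i ∈ univ.filter (fun i => i < σ i), F i * F (σ i) := by
    intro F
    rw [prod_mul_distrib, ← prod_filter_mul_prod_filter_not univ (fun i => σ i = i),
      ← prod_filter_mul_prod_filter_not (univ.filter fun i => ¬σ i = i) (fun i => i < σ i),
      filter_filter, filter_filter]
    congr 2
    · exact prod_congr (filter_congr fun i _ => ⟨fun h => h.2, fun h => ⟨h.ne', h⟩⟩) fun _ _ => rfl
    · refine prod_nbij' σ σ (fun i hi => ?_) (fun i hi => ?_) (fun i _ => hσ i)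
        (fun i _ => hσ i) (fun i _ => by rw [hσ i])
      · simp only [mem_filter, mem_univ, true_and, hσ i] at hi ⊢
        exact lt_of_le_of_ne (not_lt.mp hi.2) hi.1
      · simp only [mem_filter, mem_univ, true_and, hσ i] at hi ⊢
        exact ⟨fun h => hi.ne (h ▸ rfl), not_lt.mpr hi.le⟩
  rw [split, split]
  congr 1
  · exact prod_congr rfl fun i hi => by rw [(mem_filter.mp hi).2, hfix i (mem_filter.mp hi).2]
  · refine prod_congr rfl fun i hi => ?_
    have := hpair i (mem_filter.mp hi).2.ne'
    rwa [hσ i]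

theorem SimpleGraph.IsAcyclic.det_eq_det_of_forall_mul_swap [Fintype V] [DecidableEq V]
    (hG : G.IsAcyclic) {M M' : Matrix V V S} (hM : ∀ j k, j ≠ k → ¬G.Adj j k → M j k = 0)
    (hM' : ∀ j k, j ≠ k → ¬G.Adj j k → M' j k = 0) (hdiag : ∀ j, M j j = M' j j)
    (hswap : ∀ j k, G.Adj j k → M j k * M k j = M' j k * M' k j) :
    M.det = M'.det := by
  rw [Matrix.det_apply, Matrix.det_apply]
  refine sum_congr rfl fun σ _ => ?_
  by_cases hσ : ∀ i, σ i ≠ i → G.Adj (σ i) i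
  · rw [prod_apply_eq_of_involutive (hG.involutive_of_forall_adj hσ) (fun i _ => hdiag i)
      (fun i hi => hswap _ _ (hσ i hi))]
  · push Not at hσ
    obtain ⟨i, hi, hadj⟩ := hσ
    rw [prod_eq_zero (f := fun j => M (σ j) j) (mem_univ i) (hM _ _ hi hadj),
      prod_eq_zero (f := fun j => M' (σ j) j) (mem_univ i) (hM' _ _ hi hadj)]

end Forest

section Leaf

open Sum

variable {S n : Type*} [CommRing S] [Fintype n] [DecidableEq n]

theorem det_updateRow_single_self (A : Matrix n n S) (a : n) :
    (A.updateRow a (Pi.single a 1)).det = (A.submatrix ((↑) : {j // j ≠ a} → n) (↑)).det := by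
  rw [twoBlockTriangular_det _ (· ≠ a) fun i hi j hj => by simp_all]
  have : Subsingleton {j // ¬j ≠ a} := ⟨fun x y => Subtype.ext (by grind)⟩
  rw [det_eq_elem_of_subsingleton (toSquareBlockProp _ fun j => ¬j ≠ a) ⟨a, by simp⟩]
  simp only [toSquareBlockProp, toBlock_apply, updateRow_self, Pi.single_eq_same, mul_one]
  congr 1
  ext j k
  simp [updateRow_ne j.2]

theorem det_updateCol_inr_single_inr (M : Matrix (n ⊕ Unit) (n ⊕ Unit) S) :
    (M.updateCol (inr ()) (Pi.single (inr ()) 1)).det = (M.submatrix inl inl).det := by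
  set P := M.updateCol (inr ()) (Pi.single (inr ()) 1)
  have h₁₂ : P.toBlocks₁₂ = 0 := by ext j k; simp [P, toBlocks₁₂]
  have h₂₂ : P.toBlocks₂₂ = 1 := by ext j k; simp [P, toBlocks₂₂]
  have h₁₁ : P.toBlocks₁₁ = M.submatrix inl inl := by ext j k; simp [P, toBlocks₁₁]
  rw [← fromBlocks_toBlocks P, h₁₂, h₂₂, h₁₁, det_fromBlocks_zero₁₂, det_one, mul_one]

theorem det_updateCol_inr_single_inl (M : Matrix (n ⊕ Unit) (n ⊕ Unit) S) (a : n)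
    (hrow : ∀ k, k ≠ a → M (inr ()) (inl k) = 0) :
    (M.updateCol (inr ()) (Pi.single (inl a) 1)).det
      = -(M (inr ()) (inl a)
          * ((M.submatrix inl inl).submatrix ((↑) : {j // j ≠ a} → n) (↑)).det) := by
  set P := M.updateCol (inr ()) (Pi.single (inl a) 1)
  -- swapping the rows `inl a` and `inr ()` of `P` makes it block lower triangular
  set Q := P.submatrix (Equiv.swap (inl a) (inr ())) id
  have hQ : Q.det = -P.det := by
    rw [det_permute, Equiv.Perm.sign_swap (by simp)]
    simp
  have h₁₂ : Q.toBlocks₁₂ = 0 := by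
    ext j k
    by_cases hj : j = a <;> simp [Q, P, toBlocks₁₂, Equiv.swap_apply_def, hj]
  have h₂₂ : Q.toBlocks₂₂ = 1 := by ext j k; simp [Q, P, toBlocks₂₂]
  have h₁₁ : Q.toBlocks₁₁
      = (M.submatrix inl inl).updateRow a (M (inr ()) (inl a) • Pi.single a 1) := by
    ext j k
    by_cases hj : j = a
    · subst hj
      by_cases hk : k = j <;> simp [Q, P, toBlocks₁₁, hk, hrow]
    · simp [Q, P, toBlocks₁₁, Equiv.swap_apply_def, hj]
  rw [← neg_eq_iff_eq_neg, ← hQ, ← fromBlocks_toBlocks Q, h₁₂, h₂₂, h₁₁, det_fromBlocks_zero₁₂,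
    det_one, mul_one, det_updateRow_smul, det_updateRow_single_self]

theorem det_eq_of_leaf (M : Matrix (n ⊕ Unit) (n ⊕ Unit) S) (a : n)
    (hcol : ∀ j, j ≠ a → M (inl j) (inr ()) = 0) (hrow : ∀ k, k ≠ a → M (inr ()) (inl k) = 0) :
    M.det = M (inr ()) (inr ()) * (M.submatrix inl inl).det
      - M (inl a) (inr ()) * M (inr ()) (inl a)
        * ((M.submatrix inl inl).submatrix ((↑) : {j // j ≠ a} → n) (↑)).det := by
  have hcolM : (fun x => M x (inr ()))
      = M (inr ()) (inr ()) • Pi.single (inr ()) 1 + M (inl a) (inr ()) • Pi.single (inl a) 1 := by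
    funext x
    rcases x with j | ⟨⟩
    · by_cases hj : j = a
      · subst hj; simp
      · simp [hcol j hj, hj]
    · simp
  conv_lhs => rw [← updateCol_eq_self M (inr ()), hcolM]
  rw [det_updateCol_add, det_updateCol_smul, det_updateCol_smul, det_updateCol_inr_single_inr,
    det_updateCol_inr_single_inl M a hrow]
  ring

end Leaf

section Pencil

open scoped List

open Sum

variable {S V : Type*} [CommRing S]

def IsTournament (r : V → V → Prop) : Prop := ∀ j k, j ≠ k → (r j k ↔ ¬r k j)

theorem IsTournament.comap {W : Type*} {r : V → V → Prop} (hr : IsTournament r) {f : W → V}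
    (hf : Function.Injective f) : IsTournament fun j k => r (f j) (f k) :=
  fun j k hjk => hr (f j) (f k) (hf.ne hjk)

theorem IsEnum.isTournament {L : List V} (hL : IsEnum L) : IsTournament fun j k => [j, k] <+ L :=
  fun j k hjk => hL.1.pair_sublist_iff_not_swap (hL.2 j) (hL.2 k) hjk

theorem coxeterPencil_mul_swap (K : Matrix V V S) {r : V → V → Prop} (hr : IsTournament r)
    (t : S) {j k : V} (hjk : j ≠ k) :
    coxeterPencil K r t j k * coxeterPencil K r t k j = t * (K j k * K k j) := by
  by_cases h : r j k
  · simp only [coxeterPencil, of_apply, hjk, hjk.symm, h, (hr j k hjk).mp h, ↓reduceIte]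
    ring
  · simp only [coxeterPencil, of_apply, hjk, hjk.symm, h, (hr k j hjk.symm).mpr h, ↓reduceIte]
    ring

theorem coxeterPencil_submatrix {W : Type*} (K : Matrix V V S) (r : V → V → Prop) (t : S)
    {f : W → V} (hf : Function.Injective f) :
    (coxeterPencil K r t).submatrix f f
      = coxeterPencil (K.submatrix f f) (fun j k => r (f j) (f k)) t := by
  ext j k
  simp [coxeterPencil, hf.eq_iff]

theorem cartanOf_map {R : Type*} [CommRing R] (f : R →+* S) (G : SimpleGraph V) :
    (cartanOf R G).map f = cartanOf S G := by
  ext j k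
  simp only [cartanOf, map_apply]
  split_ifs <;> simp only [map_ofNat, map_neg, map_one, map_zero]

theorem cartanOf_submatrix {W : Type*} (G : SimpleGraph V) {f : W → V} (hf : Function.Injective f) :
    (cartanOf S G).submatrix f f = cartanOf S (G.comap f) := by
  ext j k
  simp [cartanOf, hf.eq_iff]

theorem attachVertex_comap_inl {V₁ : Type*} (G₁ : SimpleGraph V₁) (a : V₁) :
    (attachVertex G₁ a).comap inl = G₁ := by
  ext j k
  rfl

theorem SimpleGraph.IsAcyclic.det_coxeterPencil_cartanOf_eq [Fintype V] [DecidableEq V]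
    {G : SimpleGraph V} (hG : G.IsAcyclic) {r r' : V → V → Prop} (hr : IsTournament r)
    (hr' : IsTournament r') (t : S) :
    (coxeterPencil (cartanOf S G) r t).det = (coxeterPencil (cartanOf S G) r' t).det := by
  have hzero : ∀ r : V → V → Prop, ∀ j k, j ≠ k → ¬G.Adj j k →
      coxeterPencil (cartanOf S G) r t j k = 0 :=
    fun r j k hjk hadj => by simp [coxeterPencil, cartanOf, hjk, hadj]
  refine hG.det_eq_det_of_forall_mul_swap (hzero r) (hzero r') (fun j => by simp [coxeterPencil])
    fun j k hadj => ?_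
  rw [coxeterPencil_mul_swap _ hr _ hadj.ne, coxeterPencil_mul_swap _ hr' _ hadj.ne]

theorem det_coxeterPencil_attachVertex {V₁ : Type*} [Fintype V₁] [DecidableEq V₁]
    (G₁ : SimpleGraph V₁) (a : V₁) {r : V₁ ⊕ Unit → V₁ ⊕ Unit → Prop} (hr : IsTournament r)
    (t : S) :
    (coxeterPencil (cartanOf S (attachVertex G₁ a)) r t).det
      = (t + 1) * (coxeterPencil (cartanOf S G₁) (fun j k => r (inl j) (inl k)) t).det
        - t * (coxeterPencil (cartanOf S (deleteVertex G₁ a))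
            (fun j k => r (inl j.1) (inl k.1)) t).det := by
  set P := coxeterPencil (cartanOf S (attachVertex G₁ a)) r t
  have hP₁ : P.submatrix inl inl
      = coxeterPencil (cartanOf S G₁) (fun j k => r (inl j) (inl k)) t := by
    rw [coxeterPencil_submatrix _ _ _ inl_injective, cartanOf_submatrix _ inl_injective,
      attachVertex_comap_inl]
  have hP' : (coxeterPencil (cartanOf S G₁) (fun j k => r (inl j) (inl k)) t).submatrix (↑) (↑)
      = coxeterPencil (cartanOf S (deleteVertex G₁ a)) (fun j k => r (inl j.1) (inl k.1)) t := by
    rw [coxeterPencil_submatrix _ _ _ Subtype.val_injective,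
      cartanOf_submatrix _ Subtype.val_injective]
    rfl
  have hleaf : ∀ j, j ≠ a → ¬(attachVertex G₁ a).Adj (inl j) (inr ()) := fun j hj h => hj h
  have hleaf' : ∀ j, j ≠ a → ¬(attachVertex G₁ a).Adj (inr ()) (inl j) :=
    fun j hj h => hleaf j hj h.symm
  rw [det_eq_of_leaf P a (fun j hj => by simp [P, coxeterPencil, cartanOf, hleaf j hj])
      (fun k hk => by simp [P, coxeterPencil, cartanOf, hleaf' k hk]),
    hP₁, hP', coxeterPencil_mul_swap _ hr _ inl_ne_inr]
  have hadj : (attachVertex G₁ a).Adj (inl a) (inr ()) := rfl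
  simp only [P, coxeterPencil, cartanOf, hadj, hadj.symm, of_apply, ↓reduceIte, reduceCtorEq,
    mul_ite, mul_neg, mul_one, mul_zero, neg_neg]
  ring

theorem Xchar_cartanOf_eq {V : Type*} [Fintype V] [DecidableEq V] (G : SimpleGraph V) {L : List V}
    (hL : IsEnum L) :
    Xchar (cartanOf ℚ G) L = (-1) ^ Fintype.card V
      * (coxeterPencil (cartanOf ℚ[X] G) (fun j k => [j, k] <+ L) X).det := by
  rw [Xchar_eq_det_coxeterPencil _ hL, cartanOf_map]

end Pencil

/-- **Single-vertex splitting.** If `Γ` is obtained from a simply-laced tree `Γ₁` by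
attaching a single new vertex by an edge to the vertex `α ∈ Γ₁`, then
`𝒳(Γ, λ) = −(λ + 1)·𝒳(Γ₁, λ) − λ·𝒳(Γ₁∖α, λ)`. -/
theorem single_vertex_splitting (m : ℕ) (G₁ : SimpleGraph (Fin m)) (hG₁ : G₁.IsTree)
    (a : Fin m) (L : List (Fin m ⊕ Unit)) (hL : IsEnum L)
    (L₁ : List (Fin m)) (hL₁ : IsEnum L₁)
    (L₁' : List {v : Fin m // v ≠ a}) (hL₁' : IsEnum L₁') :
    Xchar (cartanOf ℚ (attachVertex G₁ a)) L
      = -((Polynomial.X + 1) * Xchar (cartanOf ℚ G₁) L₁)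
        - Polynomial.X * Xchar (cartanOf ℚ (deleteVertex G₁ a)) L₁' := by
  obtain ⟨n, rfl⟩ : ∃ n, m = n + 1 := ⟨m - 1, by have := a.pos; omega⟩
  have hacyc : G₁.IsAcyclic := hG₁.isAcyclic
  have hacyc' : (deleteVertex G₁ a).IsAcyclic := hacyc.of_comap (Function.Embedding.subtype _)
  rw [Xchar_cartanOf_eq _ hL, Xchar_cartanOf_eq _ hL₁, Xchar_cartanOf_eq _ hL₁',
    det_coxeterPencil_attachVertex G₁ a hL.isTournament,
    hacyc.det_coxeterPencil_cartanOf_eq (hL.isTournament.comap Sum.inl_injective) hL₁.isTournament,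
    hacyc'.det_coxeterPencil_cartanOf_eq
      (hL.isTournament.comap (f := fun j : {v // v ≠ a} => Sum.inl j.1)
        (Sum.inl_injective.comp Subtype.val_injective)) hL₁'.isTournament]
  simp only [Fintype.card_sum, Fintype.card_fin, Fintype.card_unit, Fintype.card_subtype_compl,
    Fintype.card_subtype_eq, Nat.add_sub_cancel]
  ring

end
end
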